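/- arXiv:2103.11990 — 4 statements merged into one kernel-verified Lean document; each statement's English description precedes it below -/
import Mathlib

section
/- Let G be a bipartite graph with a map C : E → {c_1,...,c_k} in which a vertex v_1 has a (+c−c')-deficiency and at most one other vertex v_2 is deficient. Then the maximal alternating walk with colors c and c' starting from v_1 along one of its two c-colored edges never returns to v_1. -/
/- In a bipartite graph the vertices of an alternating walk alternate between the two sides
while its edges alternate between the two colors, so every return to the starting side is
along an edge of the color the walk did not start with. Since `v₁` has no `c'`-edge, a walk
leaving `v₁` along a `c`-edge cannot come back. -/

open SimpleGraph

variable {V : Type*}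

/-- A proper edge `k`-coloring: distinct edges sharing a vertex receive distinct colors. -/
def IsProperEdgeColoring {k : ℕ} (G : SimpleGraph V) (C : Sym2 V → Fin k) : Prop :=
  ∀ e₁ ∈ G.edgeSet, ∀ e₂ ∈ G.edgeSet, e₁ ≠ e₂ → (∃ v, v ∈ e₁ ∧ v ∈ e₂) → C e₁ ≠ C e₂

/-- A graph is bipartite if its vertices can be 2-colored with no monochromatic edge. -/
def IsBipartite (G : SimpleGraph V) : Prop :=
  ∃ s : V → Bool, ∀ u v, G.Adj u v → s u ≠ s v

/-- A vertex is deficient if two distinct incident edges share a color. -/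
def DeficientAt {k : ℕ} (G : SimpleGraph V) (C : Sym2 V → Fin k) (v : V) : Prop :=
  ∃ e₁ ∈ G.edgeSet, ∃ e₂ ∈ G.edgeSet, e₁ ≠ e₂ ∧ v ∈ e₁ ∧ v ∈ e₂ ∧ C e₁ = C e₂

/-- `v` has a `(+c−c')`-deficiency: exactly two incident `c`-edges, no incident `c'`-edge,
and all other incident edges pairwise differently colored. -/
def HasDeficiency {k : ℕ} (G : SimpleGraph V) (C : Sym2 V → Fin k) (v : V) (c c' : Fin k) :
    Prop :=
  Set.ncard {e ∈ G.edgeSet | v ∈ e ∧ C e = c} = 2 ∧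
  (∀ e ∈ G.edgeSet, v ∈ e → C e ≠ c') ∧
  (∀ e₁ ∈ G.edgeSet, ∀ e₂ ∈ G.edgeSet, v ∈ e₁ → v ∈ e₂ → e₁ ≠ e₂ → C e₁ ≠ c → C e₁ ≠ C e₂)

/-- An almost edge `k`-coloring: at most two deficient vertices, each with a
`(+c−c')`-type deficiency for some colors. -/
def IsAlmostEdgeColoring {k : ℕ} (G : SimpleGraph V) (C : Sym2 V → Fin k) : Prop :=
  Set.ncard {v | DeficientAt G C v} ≤ 2 ∧
  ∀ v, DeficientAt G C v → ∃ c c', HasDeficiency G C v c c'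

/-- An alternating walk with colors `c` and `c'`: every edge is colored `c` or `c'`,
and consecutive edges have different colors. -/
def IsAltWalk {k : ℕ} (G : SimpleGraph V) (C : Sym2 V → Fin k) (c c' : Fin k)
    {u v : V} (w : G.Walk u v) : Prop :=
  (∀ e ∈ w.edges, C e = c ∨ C e = c') ∧ List.Chain' (fun e f => C e ≠ C f) w.edges

/-- The walk can be extended at its final vertex by a fresh edge of color `c` or `c'`
continuing the alternation. -/
def ExtendableAtEnd {k : ℕ} (G : SimpleGraph V) (C : Sym2 V → Fin k) (c c' : Fin k)
    {u v : V} (w : G.Walk u v) : Prop :=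
  ∃ x, G.Adj v x ∧ (C s(v, x) = c ∨ C s(v, x) = c') ∧ s(v, x) ∉ w.edges ∧
    ∀ h : w.edges ≠ [], C s(v, x) ≠ C (w.edges.getLast h)

/-- A maximal alternating walk: alternating and not extendable at either end. -/
def IsMaximalAltWalk {k : ℕ} (G : SimpleGraph V) (C : Sym2 V → Fin k) (c c' : Fin k)
    {u v : V} (w : G.Walk u v) : Prop :=
  IsAltWalk G C c c' w ∧ ¬ ExtendableAtEnd G C c c' w ∧ ¬ ExtendableAtEnd G C c c' w.reverse

/-- Swap the colors `c` and `c'` on the edges in `S`. -/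
noncomputable def flipOn {k : ℕ} (C : Sym2 V → Fin k) (c c' : Fin k) (S : Set (Sym2 V)) :
    Sym2 V → Fin k := fun e =>
  haveI := Classical.dec (e ∈ S)
  if e ∈ S then Equiv.swap c c' (C e) else C e

section AlternatingWalk

variable {k : ℕ} {G : SimpleGraph V} {C : Sym2 V → Fin k} {c c' : Fin k}

lemma IsAltWalk.symm {u x : V} {w : G.Walk u x} (h : IsAltWalk G C c c' w) :
    IsAltWalk G C c' c w :=
  ⟨fun e he => (h.1 e he).symm, h.2⟩

lemma IsAltWalk.of_cons {u u' x : V} {h : G.Adj u u'} {p : G.Walk u' x}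
    (hw : IsAltWalk G C c c' (Walk.cons h p)) : IsAltWalk G C c c' p :=
  ⟨fun e he => hw.1 e (by simp [he]), (List.isChain_cons.mp hw.2).2⟩

lemma IsAltWalk.color_head_of_cons {u u' x : V} {h : G.Adj u u'} {p : G.Walk u' x}
    (hw : IsAltWalk G C c c' (Walk.cons h p)) (hc : C s(u, u') = c) (hp : p.edges ≠ []) :
    C (p.edges.head hp) = c' := by
  have hne : C s(u, u') ≠ C (p.edges.head hp) :=
    (List.isChain_cons.mp hw.2).1 _ (List.head?_eq_some_head hp)
  rcases hw.1 _ (List.mem_cons_of_mem _ (List.head_mem hp)) with h' | h'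
  · exact absurd (hc.trans h'.symm) hne
  · exact h'

lemma IsAltWalk.exists_mem_edges_color_eq {s : V → Bool} (hs : ∀ u v, G.Adj u v → s u ≠ s v)
    {u x : V} {w : G.Walk u x} (hw : IsAltWalk G C c c' w)
    (hfirst : ∀ h : w.edges ≠ [], C (w.edges.head h) = c) :
    ∀ y ∈ w.support.tail, ∃ e ∈ w.edges, y ∈ e ∧ C e = if s y = s u then c' else c := by
  induction w generalizing c c' with
  | nil => simp
  | @cons u u' x h p ih =>
    have hc : C s(u, u') = c := hfirst (by simp)
    have hside : s u' = !s u := Bool.eq_not_iff.mpr (hs u u' h).symm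
    intro y hy
    rw [Walk.support_cons, List.tail_cons, ← p.cons_tail_support] at hy
    rcases List.mem_cons.mp hy with rfl | hy
    · exact ⟨s(u, y), by simp, by simp, by simp [hside, hc]⟩
    · obtain ⟨e, he, hye, hCe⟩ :=
        ih hw.of_cons.symm (hw.color_head_of_cons hc) y hy
      refine ⟨e, by simp [he], hye, ?_⟩
      rw [hCe, hside]
      cases s y <;> cases s u <;> simp

end AlternatingWalk

theorem stmt1_general {k : ℕ} (G : SimpleGraph V) (hbip : _root_.IsBipartite G)
    (C : Sym2 V → Fin k) (c c' : Fin k) (v₁ : V)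
    (hdef : HasDeficiency G C v₁ c c') :
    ∀ (x : V) (w : G.Walk v₁ x), IsAltWalk G C c c' w →
      (∀ h : w.edges ≠ [], C (w.edges.head h) = c) → v₁ ∉ w.support.tail := by
  obtain ⟨s, hs⟩ := hbip
  intro x w hw hfirst hv₁
  obtain ⟨e, he, hv₁e, hCe⟩ := hw.exists_mem_edges_color_eq hs hfirst v₁ hv₁
  rw [if_pos rfl] at hCe
  exact hdef.2.1 e (w.edges_subset_edgeSet he) hv₁e hCe

/-- If `v₁` has a `(+c−c')`-deficiency and at most one other vertex `v₂` is
deficient in a bipartite graph, then an alternating walk with colors `c`,`c'` starting at `v₁`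
with a `c`-edge never returns to `v₁`. -/
theorem stmt1 {k : ℕ} (G : SimpleGraph V) (hbip : _root_.IsBipartite G)
    (C : Sym2 V → Fin k) (c c' : Fin k) (v₁ v₂ : V)
    (hdef : HasDeficiency G C v₁ c c')
    (hothers : ∀ w, DeficientAt G C w → w = v₁ ∨ w = v₂) :
    ∀ (x : V) (w : G.Walk v₁ x), IsAltWalk G C c c' w →
      (∀ h : w.edges ≠ [], C (w.edges.head h) = c) → v₁ ∉ w.support.tail :=
  stmt1_general G hbip C c c' v₁ hdef
end

section
/- Let C be an almost edge k-coloring of a bipartite graph G with one or two deficient vertices. Then C can be transformed into a proper edge k-coloring by flipping the colors along at most two alternating walks, each using two colors c and c'. -/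
/-!
Let `v` carry a `(+c−c')`-deficiency and grow from `v` a maximal trail whose edges are colored
`c, c', c, …`. At every vertex other than the two ends of the trail, the trail uses as many
`c`-edges as `c'`-edges, so flipping it changes no color multiplicity there. Bipartiteness forces
the trail to end at a vertex `y ≠ v`. The flip repairs `v`, and at `y` it moves one edge from the
last color of the trail to the next color, which was rarer at `y` by maximality. Such a move keeps
a proper vertex proper and leaves a deficient vertex proper or again deficient. So after one flip
only the second deficient vertex `u` can still be deficient, and a second flip starting at `u`
repairs it.
-/

open SimpleGraph

variable {V : Type*}

namespace EdgeColoring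

variable {k : ℕ}

/-- The effect of flipping a maximal alternating trail at one of its ends, on the numbers `n x`
of edges of each color `x` there: one edge changes from `γ` to the color `γ'`, which was rarer. -/
def IsShift (n n' : Fin k → ℕ) (γ γ' : Fin k) : Prop :=
  n' γ + 1 = n γ ∧ n' γ' = n γ' + 1 ∧ n γ' < n γ ∧ ∀ x, x ≠ γ → x ≠ γ' → n' x = n x

namespace IsShift

variable {n n' : Fin k → ℕ} {γ γ' : Fin k}

theorem forall_le_one (h : IsShift n n' γ γ') (hn : ∀ x, n x ≤ 1) : ∀ x, n' x ≤ 1 := by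
  obtain ⟨h₁, h₂, hlt, h₃⟩ := h
  intro x
  grind

theorem forall_le_one_of_eq_two (h : IsShift n n' γ γ') (hγ : n γ = 2) (hγ' : n γ' = 0)
    (hn : ∀ x, x ≠ γ → n x ≤ 1) : ∀ x, n' x ≤ 1 := by
  obtain ⟨h₁, h₂, hlt, h₃⟩ := h
  intro x
  grind

/-- If `γ = d`, the repeated color becomes `γ'` (or disappears when `γ'` was absent); otherwise
`γ` had a single edge and becomes the missing color. -/
theorem deficient (h : IsShift n n' γ γ') {d d' : Fin k} (hd : n d = 2) (hd' : n d' = 0)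
    (hn : ∀ x, x ≠ d → n x ≤ 1) :
    (∀ x, n' x ≤ 1) ∨ ∃ e e', n' e = 2 ∧ n' e' = 0 ∧ ∀ x, x ≠ e → n' x ≤ 1 := by
  obtain ⟨h₁, h₂, hlt, h₃⟩ := h
  by_cases hγ : γ = d
  · subst hγ
    rcases Nat.lt_or_ge 0 (n γ') with hpos | hzero
    · exact Or.inr ⟨γ', d', by grind, by grind, fun x hx => by grind⟩
    · exact Or.inl fun x => by grind
  · exact Or.inr ⟨d, γ, by grind, by grind, fun x hx => by grind⟩

end IsShift

noncomputable def colorDeg (S : Set (Sym2 V)) (C : Sym2 V → Fin k) (z : V) (x : Fin k) : ℕ :=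
  {e ∈ S | z ∈ e ∧ C e = x}.ncard

def ProperAt (G : SimpleGraph V) (C : Sym2 V → Fin k) (z : V) : Prop :=
  ∀ x, colorDeg G.edgeSet C z x ≤ 1

variable {G : SimpleGraph V} {C : Sym2 V → Fin k} {c c' : Fin k}

section ColorDeg

variable [Finite V] {S T : Set (Sym2 V)} {z : V}

theorem colorDeg_le_one_iff {x : Fin k} :
    colorDeg S C z x ≤ 1 ↔
      ∀ e₁ ∈ S, ∀ e₂ ∈ S, z ∈ e₁ → z ∈ e₂ → C e₁ = x → C e₂ = x → e₁ = e₂ := by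
  rw [colorDeg, Set.ncard_le_one]
  simp only [Set.mem_ofPred_eq]
  grind

theorem colorDeg_eq_zero_iff {x : Fin k} :
    colorDeg S C z x = 0 ↔ ∀ e ∈ S, z ∈ e → C e ≠ x := by
  rw [colorDeg, Set.ncard_eq_zero, Set.eq_empty_iff_forall_notMem]
  simp only [Set.mem_ofPred_eq]
  grind

theorem colorDeg_inter_add_colorDeg_diff (x : Fin k) :
    colorDeg (S ∩ T) C z x + colorDeg (S \ T) C z x = colorDeg S C z x := by
  unfold colorDeg
  convert Set.ncard_inter_add_ncard_sdiff_eq_ncard {e ∈ S | z ∈ e ∧ C e = x} T using 3 <;>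
    ext e <;> simp only [Set.mem_inter_iff, Set.mem_sdiff, Set.mem_ofPred_eq] <;> tauto

theorem colorDeg_flipOn (x : Fin k) :
    colorDeg S (flipOn C c c' T) z x =
      colorDeg (S ∩ T) C z (Equiv.swap c c' x) + colorDeg (S \ T) C z x := by
  rw [← colorDeg_inter_add_colorDeg_diff (T := T)]
  congr 1 <;> unfold colorDeg <;> congr 1 <;> ext e <;>
    simp only [Set.mem_inter_iff, Set.mem_sdiff, Set.mem_ofPred_eq, flipOn] <;>
    constructor <;> rintro ⟨hS, hz, hx⟩ <;> simp_all [Equiv.swap_apply_eq_iff]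

theorem colorDeg_flipOn_of_eq (ht : colorDeg (S ∩ T) C z c = colorDeg (S ∩ T) C z c') :
    colorDeg S (flipOn C c c' T) z = colorDeg S C z := by
  funext x
  rw [colorDeg_flipOn, ← colorDeg_inter_add_colorDeg_diff (S := S) (T := T) x]
  congr 1
  rcases eq_or_ne x c with rfl | hc
  · rw [Equiv.swap_apply_left, ht]
  rcases eq_or_ne x c' with rfl | hc'
  · rw [Equiv.swap_apply_right, ht]
  rw [Equiv.swap_apply_of_ne_of_ne hc hc']

theorem isShift_colorDeg_flipOn (ht : colorDeg (S ∩ T) C z c = colorDeg (S ∩ T) C z c' + 1)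
    (ho : colorDeg (S \ T) C z c' = 0) :
    IsShift (colorDeg S C z) (colorDeg S (flipOn C c c' T) z) c c' := by
  have hcc : c ≠ c' := by rintro rfl; omega
  have hsum := colorDeg_inter_add_colorDeg_diff (S := S) (T := T) (C := C) (z := z)
  refine ⟨?_, ?_, ?_, fun x hc hc' => ?_⟩
  · rw [colorDeg_flipOn, Equiv.swap_apply_left, ← hsum c]; omega
  · rw [colorDeg_flipOn, Equiv.swap_apply_right, ← hsum c']; omega
  · rw [← hsum c, ← hsum c']; omega
  · rw [colorDeg_flipOn, Equiv.swap_apply_of_ne_of_ne hc hc', hsum]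

theorem properAt_iff :
    ProperAt G C z ↔ ∀ e₁ ∈ G.edgeSet, ∀ e₂ ∈ G.edgeSet, z ∈ e₁ → z ∈ e₂ → e₁ ≠ e₂ →
      C e₁ ≠ C e₂ := by
  simp only [ProperAt, colorDeg_le_one_iff]
  exact ⟨fun h e₁ h₁ e₂ h₂ hz₁ hz₂ hne hC => hne (h _ e₁ h₁ e₂ h₂ hz₁ hz₂ rfl hC.symm),
    fun h x e₁ h₁ e₂ h₂ hz₁ hz₂ hx₁ hx₂ => by_contra fun hne =>
      h e₁ h₁ e₂ h₂ hz₁ hz₂ hne (hx₁.trans hx₂.symm)⟩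

theorem properAt_iff_not_deficientAt : ProperAt G C z ↔ ¬ DeficientAt G C z := by
  rw [properAt_iff, DeficientAt]
  grind

theorem isProperEdgeColoring_of_forall_properAt (h : ∀ z, ProperAt G C z) :
    IsProperEdgeColoring G C := fun _ h₁ _ h₂ hne ⟨z, hz₁, hz₂⟩ =>
  properAt_iff.1 (h z) _ h₁ _ h₂ hz₁ hz₂ hne

theorem hasDeficiency_iff :
    HasDeficiency G C z c c' ↔ colorDeg G.edgeSet C z c = 2 ∧ colorDeg G.edgeSet C z c' = 0 ∧
      ∀ x, x ≠ c → colorDeg G.edgeSet C z x ≤ 1 := by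
  rw [HasDeficiency, colorDeg_eq_zero_iff]
  refine Iff.rfl.and (Iff.rfl.and ?_)
  simp only [colorDeg_le_one_iff]
  exact ⟨fun h x hx e₁ h₁ e₂ h₂ hz₁ hz₂ hx₁ hx₂ => by_contra fun hne =>
      h e₁ h₁ e₂ h₂ hz₁ hz₂ hne (hx₁ ▸ hx) (hx₁.trans hx₂.symm),
    fun h e₁ h₁ e₂ h₂ hz₁ hz₂ hne hc hC => hne (h _ hc e₁ h₁ e₂ h₂ hz₁ hz₂ rfl hC.symm)⟩

end ColorDeg

variable (C c c') in
theorem flipOn_comm (S : Set (Sym2 V)) : flipOn C c c' S = flipOn C c' c S := by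
  unfold flipOn
  rw [Equiv.swap_comm]

theorem flipOn_nil {u : V} : flipOn C c c' {e | e ∈ (Walk.nil : G.Walk u u).edges} = C := by
  funext e
  simp [flipOn]

theorem isAltWalk_nil {u : V} : IsAltWalk G C c c' (Walk.nil : G.Walk u u) :=
  ⟨by simp, List.IsChain.nil⟩

def altColor (c c' : Fin k) (i : ℕ) : Fin k := if Even i then c else c'

theorem altColor_succ (c c' : Fin k) (i : ℕ) : altColor c c' (i + 1) = altColor c' c i := by
  by_cases hi : Even i <;> simp [altColor, hi, Nat.even_add_one]

def IsAltFrom (C : Sym2 V → Fin k) (c c' : Fin k) {u v : V} (w : G.Walk u v) : Prop :=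
  ∀ i (h : i < w.edges.length), C w.edges[i] = altColor c c' i

namespace IsAltFrom

theorem nil {u : V} : IsAltFrom C c c' (Walk.nil : G.Walk u u) := fun i h => by simp at h

theorem of_cons {u v w : V} {h : G.Adj u v} {p : G.Walk v w}
    (hp : IsAltFrom C c c' (.cons h p)) : C s(u, v) = c ∧ IsAltFrom C c' c p := by
  refine ⟨by simpa [altColor] using hp 0 (by simp), fun i hi => ?_⟩
  rw [← altColor_succ]
  simpa using hp (i + 1) (by simpa using hi)

theorem concat {u v x : V} {w : G.Walk u v} (hw : IsAltFrom C c c' w) (h : G.Adj v x)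
    (hx : C s(v, x) = altColor c c' w.length) : IsAltFrom C c c' (w.concat h) := by
  intro i hi
  simp only [Walk.edges_concat, List.concat_eq_append, List.length_append,
    List.length_singleton] at hi ⊢
  rcases Nat.lt_succ_iff_lt_or_eq.1 hi with hi | rfl
  · rw [List.getElem_append_left hi]
    exact hw i hi
  · simpa [Walk.length_edges] using hx

theorem isAltWalk {u v : V} {w : G.Walk u v} (hw : IsAltFrom C c c' w) (hcc : c ≠ c') :
    IsAltWalk G C c c' w := by
  have hcol : ∀ i, altColor c c' i = c ∨ altColor c c' i = c' := fun i => by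
    unfold altColor; split <;> simp
  refine ⟨fun e he => ?_, ?_⟩
  · obtain ⟨i, hi, rfl⟩ := List.mem_iff_getElem.1 he
    exact hw i hi ▸ hcol i
  · refine List.isChain_iff_getElem.2 fun i hi => ?_
    rw [hw i (by omega), hw (i + 1) hi, altColor_succ]
    by_cases he : Even i <;> simp [altColor, he, hcc, hcc.symm]

/-- Every passage of the walk through `z` uses one `c`-edge and one `c'`-edge there; only the
first edge (at `a`, color `c`) and the last one (at `b`) are unmatched. -/
theorem countP_sub_countP [DecidableEq V] {a b : V} {w : G.Walk a b}
    (hw : IsAltFrom C c c' w) (hcc : c ≠ c') (z : V) :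
    (w.edges.countP (fun e => z ∈ e ∧ C e = c) : ℤ) -
        w.edges.countP (fun e => z ∈ e ∧ C e = c') =
      (if z = a then 1 else 0) - (-1) ^ w.length * (if z = b then 1 else 0) := by
  induction w generalizing c c' with
  | nil => simp
  | @cons u v b h p ih =>
    obtain ⟨hc, hp⟩ := hw.of_cons
    have huv : u ≠ v := h.ne
    have := ih hp hcc.symm
    clear ih
    simp only [Walk.edges_cons, List.countP_cons, Walk.length_cons, pow_succ, Sym2.mem_iff, hc,
      hcc] at this ⊢
    split_ifs at this ⊢ <;> grind

theorem colorDeg_inter_sub [DecidableEq V] {a b : V} {w : G.Walk a b}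
    (hw : IsAltFrom C c c' w) (ht : w.IsTrail) (hcc : c ≠ c') (z : V) :
    (colorDeg (G.edgeSet ∩ {e | e ∈ w.edges}) C z c : ℤ) -
        colorDeg (G.edgeSet ∩ {e | e ∈ w.edges}) C z c' =
      (if z = a then 1 else 0) - (-1) ^ w.length * (if z = b then 1 else 0) := by
  have hcount (x : Fin k) : colorDeg (G.edgeSet ∩ {e | e ∈ w.edges}) C z x =
      w.edges.countP (fun e => z ∈ e ∧ C e = x) := by
    have hset : {e ∈ G.edgeSet ∩ {e | e ∈ w.edges} | z ∈ e ∧ C e = x} =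
        ↑(w.edges.filter (fun e => z ∈ e ∧ C e = x)).toFinset := by
      ext e
      simp only [Set.mem_inter_iff, Set.mem_ofPred_eq, Finset.mem_coe, List.mem_toFinset,
        List.mem_filter, decide_eq_true_eq]
      exact ⟨fun ⟨⟨_, he⟩, hx⟩ => ⟨he, hx⟩, fun ⟨he, hx⟩ => ⟨⟨w.edges_subset_edgeSet he, he⟩, hx⟩⟩
    rw [colorDeg, hset, Set.ncard_coe_finset,
      List.toFinset_card_of_nodup (ht.edges_nodup.filter _), List.countP_eq_length_filter]
  rw [hcount, hcount]
  exact hw.countP_sub_countP hcc z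

end IsAltFrom

structure IsMaximalAltTrail (C : Sym2 V → Fin k) (c c' : Fin k) {u v : V} (w : G.Walk u v) :
    Prop where
  isTrail : w.IsTrail
  isAltFrom : IsAltFrom C c c' w
  maximal : ∀ e ∈ G.edgeSet, v ∈ e → C e = altColor c c' w.length → e ∈ w.edges

variable (C c c') in
theorem exists_isMaximalAltTrail [Finite V] {u v : V} (w : G.Walk u v) (ht : w.IsTrail)
    (hw : IsAltFrom C c c' w) : ∃ (y : V) (w' : G.Walk u y), IsMaximalAltTrail C c c' w' := by
  by_cases hext : ∃ x, ∃ h : G.Adj v x, C s(v, x) = altColor c c' w.length ∧ s(v, x) ∉ w.edges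
  · obtain ⟨x, h, hx, hfresh⟩ := hext
    have ht' : (w.concat h).IsTrail := by
      rw [Walk.isTrail_def, Walk.edges_concat, List.nodup_concat]
      exact ⟨hfresh, ht.edges_nodup⟩
    exact exists_isMaximalAltTrail (w.concat h) ht' (hw.concat h hx)
  · refine ⟨v, w, ht, hw, fun e he hv hc => ?_⟩
    obtain ⟨x, rfl⟩ := Sym2.mem_iff_exists.1 hv
    by_contra hfresh
    exact hext ⟨x, he, hc, hfresh⟩
termination_by Nat.card (Sym2 V) - w.length
decreasing_by
  have := ht'.edges_nodup.length_le_natCard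
  simp only [Walk.length_edges, Walk.length_concat] at this ⊢
  omega

namespace IsMaximalAltTrail

variable [Finite V] {a b : V} {w : G.Walk a b}

theorem colorDeg_flipOn_of_ne (hw : IsMaximalAltTrail C c c' w) (hcc : c ≠ c') {z : V}
    (hza : z ≠ a) (hzb : z ≠ b) :
    colorDeg G.edgeSet (flipOn C c c' {e | e ∈ w.edges}) z = colorDeg G.edgeSet C z := by
  classical
  have := hw.isAltFrom.colorDeg_inter_sub hw.isTrail hcc z
  simp only [hza, hzb, if_false, mul_zero, sub_zero] at this
  exact colorDeg_flipOn_of_eq (by omega)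

theorem isShift_start (hw : IsMaximalAltTrail C c c' w) (hcc : c ≠ c') (hab : a ≠ b)
    (h0 : colorDeg G.edgeSet C a c' = 0) :
    IsShift (colorDeg G.edgeSet C a) (colorDeg G.edgeSet (flipOn C c c' {e | e ∈ w.edges}) a)
      c c' := by
  classical
  have := hw.isAltFrom.colorDeg_inter_sub hw.isTrail hcc a
  have hsum := colorDeg_inter_add_colorDeg_diff (S := G.edgeSet) (T := {e | e ∈ w.edges})
    (C := C) (z := a) c'
  simp only [hab, if_true, if_false, mul_zero, sub_zero] at this
  exact isShift_colorDeg_flipOn (by omega) (by omega)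

theorem exists_isShift_end (hw : IsMaximalAltTrail C c c' w) (hcc : c ≠ c') (hab : a ≠ b) :
    ∃ γ γ', IsShift (colorDeg G.edgeSet C b)
      (colorDeg G.edgeSet (flipOn C c c' {e | e ∈ w.edges}) b) γ γ' := by
  classical
  have hsub := hw.isAltFrom.colorDeg_inter_sub hw.isTrail hcc b
  have hnext : colorDeg (G.edgeSet \ {e | e ∈ w.edges}) C b (altColor c c' w.length) = 0 :=
    colorDeg_eq_zero_iff.2 fun e he hb hc => he.2 (hw.maximal e he.1 hb hc)
  simp only [hab.symm, if_true, if_false] at hsub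
  rcases Nat.even_or_odd w.length with hL | hL
  · rw [hL.neg_one_pow] at hsub
    simp only [altColor, hL, if_true] at hnext
    exact ⟨c', c, flipOn_comm C c c' _ ▸ isShift_colorDeg_flipOn (by omega) hnext⟩
  · rw [hL.neg_one_pow] at hsub
    simp only [altColor, Nat.not_even_iff_odd.2 hL, if_false] at hnext
    exact ⟨c, c', isShift_colorDeg_flipOn (by omega) hnext⟩

/-- A closed trail in a bipartite graph has even length, so it would use as many `c`- as
`c'`-edges at `a`, i.e. none, whereas maximality forces both `c`-edges at `a` into it. -/
theorem ne_of_colorDeg_eq_two (hw : IsMaximalAltTrail C c c' w) (hcc : c ≠ c')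
    (χ : G.Coloring Bool) (h2 : colorDeg G.edgeSet C a c = 2)
    (h0 : colorDeg G.edgeSet C a c' = 0) : a ≠ b := by
  rintro rfl
  classical
  have hL : Even w.length := (χ.even_length_iff_congr w).2 Iff.rfl
  have hsub := hw.isAltFrom.colorDeg_inter_sub hw.isTrail hcc a
  simp only [if_true, hL.neg_one_pow, one_mul, sub_self] at hsub
  have hnext : colorDeg (G.edgeSet \ {e | e ∈ w.edges}) C a c = 0 := by
    refine colorDeg_eq_zero_iff.2 fun e he ha hc => he.2 (hw.maximal e he.1 ha ?_)
    simp only [altColor, hL, if_true, hc]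
  have hsum := colorDeg_inter_add_colorDeg_diff (S := G.edgeSet) (T := {e | e ∈ w.edges})
    (C := C) (z := a)
  have := hsum c
  have := hsum c'
  omega

end IsMaximalAltTrail

theorem exists_isAltWalk_flipOn [Finite V] (χ : G.Coloring Bool) {v : V}
    (hv : HasDeficiency G C v c c') :
    ∃ (y : V) (w : G.Walk v y), IsAltWalk G C c c' w ∧
      ProperAt G (flipOn C c c' {e | e ∈ w.edges}) v ∧
      ∀ z, z ≠ v → (ProperAt G C z → ProperAt G (flipOn C c c' {e | e ∈ w.edges}) z) ∧
        ∀ d d', HasDeficiency G C z d d' → ProperAt G (flipOn C c c' {e | e ∈ w.edges}) z ∨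
          ∃ e e', HasDeficiency G (flipOn C c c' {e | e ∈ w.edges}) z e e' := by
  rw [hasDeficiency_iff] at hv
  obtain ⟨hc, hc', hle⟩ := hv
  have hcc : c ≠ c' := by rintro rfl; omega
  obtain ⟨y, w, hw⟩ := exists_isMaximalAltTrail C c c' (.nil : G.Walk v v) .nil .nil
  have hvy : v ≠ y := hw.ne_of_colorDeg_eq_two hcc χ hc hc'
  refine ⟨y, w, hw.isAltFrom.isAltWalk hcc,
    (hw.isShift_start hcc hvy hc').forall_le_one_of_eq_two hc hc' hle, fun z hzv => ?_⟩
  simp only [ProperAt, hasDeficiency_iff]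
  by_cases hzy : z = y
  · subst hzy
    obtain ⟨γ, γ', hshift⟩ := hw.exists_isShift_end hcc hvy
    exact ⟨hshift.forall_le_one, fun d d' ⟨h2, h0, h1⟩ => hshift.deficient h2 h0 h1⟩
  · rw [hw.colorDeg_flipOn_of_ne hcc hzv hzy]
    exact ⟨id, fun d d' hd => Or.inr ⟨d, d', hd⟩⟩

theorem IsAlmostEdgeColoring.exists_forall_properAt [Finite V] (h : IsAlmostEdgeColoring G C)
    {v : V} (hv : DeficientAt G C v) : ∃ u, ∀ z, z ≠ v → z ≠ u → ProperAt G C z := by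
  by_cases hex : ∃ u, u ≠ v ∧ DeficientAt G C u
  · obtain ⟨u, huv, hu⟩ := hex
    refine ⟨u, fun z hzv hzu => properAt_iff_not_deficientAt.2 fun hz => ?_⟩
    have h3 : ({v, u, z} : Set V).ncard = 3 :=
      Set.ncard_eq_three.2 ⟨v, u, z, huv.symm, hzv.symm, hzu.symm, rfl⟩
    have hsub : ({v, u, z} : Set V) ⊆ {x | DeficientAt G C x} := by
      rintro x (rfl | rfl | rfl) <;> assumption
    have := (Set.ncard_le_ncard hsub).trans h.1
    omega
  · push Not at hex
    exact ⟨v, fun z hzv _ => properAt_iff_not_deficientAt.2 (hex z hzv)⟩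

end EdgeColoring

open EdgeColoring in
/-- An almost edge `k`-coloring of a bipartite graph with one or two deficient
vertices can be transformed into a proper edge `k`-coloring by flipping the colors along at
most two alternating walks, each with two colors. -/
theorem stmt2 [Fintype V] {k : ℕ} (G : SimpleGraph V) (hbip : _root_.IsBipartite G)
    (C : Sym2 V → Fin k) (halmost : IsAlmostEdgeColoring G C)
    (hne : ∃ v, DeficientAt G C v) :
    ∃ (a b a' b' : Fin k) (x₁ y₁ x₂ y₂ : V) (w₁ : G.Walk x₁ y₁) (w₂ : G.Walk x₂ y₂),
      IsAltWalk G C a b w₁ ∧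
      IsAltWalk G (flipOn C a b {e | e ∈ w₁.edges}) a' b' w₂ ∧
      IsProperEdgeColoring G
        (flipOn (flipOn C a b {e | e ∈ w₁.edges}) a' b' {e | e ∈ w₂.edges}) := by
  classical
  obtain ⟨s, hs⟩ := hbip
  let χ : G.Coloring Bool := Coloring.mk s fun h => hs _ _ h
  obtain ⟨v, hv⟩ := hne
  obtain ⟨c, c', hvc⟩ := halmost.2 v hv
  obtain ⟨u, hu⟩ := halmost.exists_forall_properAt hv
  obtain ⟨y₁, w₁, halt₁, hv₁, hC₁⟩ := exists_isAltWalk_flipOn χ hvc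
  set C₁ := flipOn C c c' {e | e ∈ w₁.edges}
  have hC₁u : ∀ z, z ≠ u → ProperAt G C₁ z := fun z hzu =>
    if hzv : z = v then hzv ▸ hv₁ else (hC₁ z hzv).1 (hu z hzv hzu)
  by_cases hu₁ : ProperAt G C₁ u
  · refine ⟨c, c', c, c', v, y₁, u, u, w₁, .nil, halt₁, isAltWalk_nil, ?_⟩
    rw [flipOn_nil]
    exact isProperEdgeColoring_of_forall_properAt fun z =>
      if hzu : z = u then hzu ▸ hu₁ else hC₁u z hzu
  obtain ⟨d, d', hud⟩ : ∃ d d', HasDeficiency G C₁ u d d' := by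
    have huv : u ≠ v := fun h => hu₁ (h ▸ hv₁)
    by_cases hdef : DeficientAt G C u
    · obtain ⟨d, d', hd⟩ := halmost.2 u hdef
      exact ((hC₁ u huv).2 d d' hd).resolve_left hu₁
    · exact absurd ((hC₁ u huv).1 (properAt_iff_not_deficientAt.2 hdef)) hu₁
  obtain ⟨y₂, w₂, halt₂, hu₂, hC₂⟩ := exists_isAltWalk_flipOn χ hud
  refine ⟨c, c', d, d', v, y₁, u, y₂, w₁, w₂, halt₁, halt₂,
    isProperEdgeColoring_of_forall_properAt fun z => ?_⟩
  exact if hzu : z = u then hzu ▸ hu₂ else (hC₂ z hzu).1 (hC₁u z hzu)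
end

section
/- Let C be an almost edge k-coloring of a k-regular bipartite graph such that vertex v_1 has a (+c−c')-deficiency, vertex v_2 has a (+c'−c)-deficiency, and v_1 and v_2 lie in the same side of the bipartition. Let c'' be a color different from c and c'. Then the longest alternating walk with colors c' and c'' that starts at v_2 with a c''-edge is a cycle (i.e., it returns to v_2). -/
/-!
Suppose the walk ends at `x ≠ v₂`. A walk between the two vertices `v₁`, `v₂` on the same side
has even length, and an alternating walk that starts with a `c''`-edge and has even length ends
with a `c'`-edge, which `v₁` lacks; so `x ≠ v₁` and `x` is not deficient: each colour occurs at
`x` exactly once. A trail leaving `v₂` meets its other endpoint `x` in an odd number of edges;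
here they are coloured `c'` or `c''`, so there are at most two, hence only the last one. The edge
at `x` of the other colour of the two is therefore off the walk and extends it.
-/

open SimpleGraph

variable {V : Type*}

theorem List.getLast_eq_ite_of_isChain_ne {α : Type*} {a b : α} {L : List α} (hab : a ≠ b)
    (hL : ∀ x ∈ L, x = a ∨ x = b) (hchain : L.IsChain (· ≠ ·)) (hne : L ≠ [])
    (hhead : L.head hne = a) : L.getLast hne = if Even L.length then b else a := by
  induction L generalizing a b with
  | nil => contradiction
  | cons x t ih =>
    cases t with
    | nil => simp_all
    | cons y t =>
      obtain rfl : x = a := hhead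
      have hy : y = b :=
        (hL y (by simp)).resolve_left fun h => (isChain_cons_cons.1 hchain).1 h.symm
      rw [getLast_cons_cons, ih hab.symm (fun z hz => (hL z (mem_cons_of_mem _ hz)).symm)
        (isChain_cons_cons.1 hchain).2 (cons_ne_nil _ _) hy]
      by_cases he : Even (y :: t).length <;> simp_all [Nat.even_add_one]

section

variable {G : SimpleGraph V} {k : ℕ} {C : Sym2 V → Fin k} {a b : Fin k}

theorem IsAltWalk.color_getLast_eq_ite {u v : V} {w : G.Walk u v} (hw : IsAltWalk G C a b w)
    (hab : a ≠ b) (hne : w.edges ≠ []) (hhead : C (w.edges.head hne) = b) :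
    C (w.edges.getLast hne) = if Even w.length then a else b := by
  have := List.getLast_eq_ite_of_isChain_ne (L := w.edges.map C) hab.symm
    (by simpa using fun e he => (hw.1 e he).symm) ((List.isChain_map C).2 hw.2)
    (by simpa using hne) (by simpa using hhead)
  simpa [List.getLast_map, List.head_map] using this

theorem existsUnique_incident_color_of_not_deficientAt [Fintype V] [DecidableRel G.Adj] {x : V}
    (hdeg : G.degree x = k) (hx : ¬ DeficientAt G C x) (d : Fin k) :
    ∃! e, e ∈ G.incidenceSet x ∧ C e = d := by
  classical
  have hinj : Set.InjOn C (G.incidenceSet x) := fun e₁ h₁ e₂ h₂ hC => by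
    by_contra hne
    exact hx ⟨e₁, h₁.1, e₂, h₂.1, hne, h₁.2, h₂.2, hC⟩
  have himage : (G.incidenceFinset x).image C = Finset.univ := by
    refine Finset.eq_univ_of_card _ ?_
    rw [Finset.card_image_of_injOn (by simpa using hinj), card_incidenceFinset_eq_degree, hdeg,
      Fintype.card_fin]
  obtain ⟨e, he, hed⟩ := Finset.mem_image.1 (himage ▸ Finset.mem_univ d)
  rw [mem_incidenceFinset] at he
  exact ⟨e, ⟨he, hed⟩, fun e' ⟨he', he'd⟩ => hinj he' he (he'd.trans hed.symm)⟩

theorem SimpleGraph.Walk.IsTrail.eq_mk_penultimate_of_mem_edges [DecidableEq V] {u x : V}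
    {w : G.Walk u x} (hw : w.IsTrail) (hux : u ≠ x) {g₁ g₂ : Sym2 V}
    (hsub : ∀ e ∈ w.edges, x ∈ e → e = g₁ ∨ e = g₂) {e : Sym2 V} (he : e ∈ w.edges)
    (hxe : x ∈ e) : e = s(w.penultimate, x) := by
  set T := (w.edges.filter (x ∈ ·)).toFinset
  have hodd : ¬ Even T.card := by
    rw [List.toFinset_card_of_nodup (hw.edges_nodup.filter _), ← List.countP_eq_length_filter]
    simpa [hw.even_countP_edges_iff x] using hux
  have hle : T.card ≤ 2 := by
    refine (Finset.card_le_card (t := {g₁, g₂}) fun f hf => ?_).trans Finset.card_le_two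
    simp only [T, List.mem_toFinset, List.mem_filter, decide_eq_true_eq] at hf
    simpa using hsub f hf.1 hf.2
  obtain ⟨g, hg⟩ : ∃ g, T = {g} := Finset.card_eq_one.1 <| by
    obtain ⟨m, hm⟩ := Nat.not_even_iff_odd.1 hodd
    omega
  have hmem : ∀ f ∈ w.edges, x ∈ f → f = g := fun f hf hxf => by
    have hfT : f ∈ T := by simp [T, hf, hxf]
    rwa [hg, Finset.mem_singleton] at hfT
  rw [hmem e he hxe, hmem _ (w.mk_penultimate_end_mem_edges (w.not_nil_of_ne hux)) (by simp)]

theorem extendableAtEnd_of_mem_incidenceSet {u x : V} {w : G.Walk u x} {f : Sym2 V}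
    (hf : f ∈ G.incidenceSet x) (hcol : C f = a ∨ C f = b) (hfw : f ∉ w.edges)
    (hlast : ∀ h : w.edges ≠ [], C f ≠ C (w.edges.getLast h)) : ExtendableAtEnd G C a b w := by
  obtain ⟨y, rfl⟩ := Sym2.mem_iff_exists.1 hf.2
  exact ⟨y, hf.1, hcol, hfw, hlast⟩

theorem IsAltWalk.extendableAtEnd_of_existsUnique {u x : V} {w : G.Walk u x} (hw : w.IsTrail)
    (halt : IsAltWalk G C a b w) (hab : a ≠ b) (hux : u ≠ x)
    (huniq : ∀ d, ∃! e, e ∈ G.incidenceSet x ∧ C e = d) : ExtendableAtEnd G C a b w := by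
  classical
  have hlast := w.mk_penultimate_end_mem_edges (w.not_nil_of_ne hux)
  obtain ⟨d, hd, hdl⟩ : ∃ d, (d = a ∨ d = b) ∧ d ≠ C s(w.penultimate, x) := by
    rcases halt.1 _ hlast with h | h
    exacts [⟨b, .inr rfl, h ▸ hab.symm⟩, ⟨a, .inl rfl, h ▸ hab⟩]
  obtain ⟨g₁, -, hg₁⟩ := huniq a
  obtain ⟨g₂, -, hg₂⟩ := huniq b
  have hsub : ∀ e ∈ w.edges, x ∈ e → e = g₁ ∨ e = g₂ := fun e he hxe =>
    (halt.1 e he).imp (fun h => hg₁ e ⟨⟨w.edges_subset_edgeSet he, hxe⟩, h⟩)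
      (fun h => hg₂ e ⟨⟨w.edges_subset_edgeSet he, hxe⟩, h⟩)
  obtain ⟨f, ⟨hf, rfl⟩, -⟩ := huniq d
  refine extendableAtEnd_of_mem_incidenceSet hf hd (fun hfw => hdl ?_) fun h => ?_
  · rw [hw.eq_mk_penultimate_of_mem_edges hux hsub hfw hf.2]
  · rwa [Walk.getLast_edges_eq_mk_penultimate_end]

end

theorem stmt5_general [Fintype V] {k : ℕ} (G : SimpleGraph V) [DecidableRel G.Adj]
    (hreg : ∀ v, G.degree v = k)
    (s : V → Bool) (hs : ∀ u v, G.Adj u v → s u ≠ s v)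
    (C : Sym2 V → Fin k) (c c' c'' : Fin k) (v₁ v₂ : V)
    (hd1 : HasDeficiency G C v₁ c c')
    (hothers : ∀ w, DeficientAt G C w → w = v₁ ∨ w = v₂)
    (hside : s v₁ = s v₂) (h2 : c'' ≠ c') :
    ∀ (x : V) (w : G.Walk v₂ x), w.IsTrail → IsAltWalk G C c' c'' w →
      (∀ h : w.edges ≠ [], C (w.edges.head h) = c'') →
      ¬ ExtendableAtEnd G C c' c'' w → w.edges ≠ [] → x = v₂ := by
  intro x w hw halt hhead hnext hne
  by_contra hx
  by_cases hx₁ : x = v₁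
  · subst hx₁
    have heven : Even w.length := ((Coloring.mk s fun h => hs _ _ h).even_length_iff_congr w).2
      (iff_of_eq (congrArg (· = true) hside.symm))
    have hlast := halt.color_getLast_eq_ite h2.symm hne (hhead hne)
    rw [if_pos heven, Walk.getLast_edges_eq_mk_penultimate_end] at hlast
    exact hd1.2.1 _ (w.edges_subset_edgeSet (w.mk_penultimate_end_mem_edges
      (w.not_nil_of_ne (Ne.symm hx)))) (by simp) hlast
  · have hnd : ¬ DeficientAt G C x := fun h => (hothers x h).elim hx₁ hx
    exact hnext (halt.extendableAtEnd_of_existsUnique hw h2.symm (Ne.symm hx)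
      (existsUnique_incident_color_of_not_deficientAt (hreg x) hnd))

/-- In an almost edge `k`-coloring of a `k`-regular bipartite graph where `v₁`
is `(+c−c')`-deficient, `v₂` is `(+c'−c)`-deficient, both in the same side of the
bipartition, and `c''∉{c,c'}`, the longest (maximal, edge-non-repeating) alternating walk
with colors `c'` and `c''` starting at `v₂` with a `c''`-edge is a cycle: it ends at `v₂`. -/
theorem stmt5 [Fintype V] {k : ℕ} (G : SimpleGraph V) [DecidableRel G.Adj]
    (hreg : ∀ v, G.degree v = k)
    (s : V → Bool) (hs : ∀ u v, G.Adj u v → s u ≠ s v)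
    (C : Sym2 V → Fin k) (c c' c'' : Fin k) (v₁ v₂ : V)
    (hd1 : HasDeficiency G C v₁ c c') (hd2 : HasDeficiency G C v₂ c' c)
    (hothers : ∀ w, DeficientAt G C w → w = v₁ ∨ w = v₂)
    (hside : s v₁ = s v₂) (h1 : c'' ≠ c) (h2 : c'' ≠ c') :
    ∀ (x : V) (w : G.Walk v₂ x), w.IsTrail → IsAltWalk G C c' c'' w →
      (∀ h : w.edges ≠ [], C (w.edges.head h) = c'') →
      ¬ ExtendableAtEnd G C c' c'' w → w.edges ≠ [] → x = v₂ :=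
  stmt5_general G hreg s hs C c c' c'' v₁ v₂ hd1 hothers hside h2
end

section
/- Let C be a proper edge coloring of a bipartite graph G, let c and c' be two colors, and let P be the vertex-disjoint union of (one or two) maximal alternating paths with colors c and c'. The map obtained from C by swapping colors c and c' on all edges of P is again a proper edge coloring of G. -/
/-!
At a vertex `x` of a maximal `c`/`c'`-alternating walk `w`, every edge of color `c` or `c'` already
lies on `w`: at an interior vertex the two edges of `w` through `x` carry both colors, so properness
leaves no room for a third one; at an end vertex such an edge would extend `w`. Hence the edges of
the paths form a set closed under passing to adjacent `c`/`c'`-edges, and swapping the two colors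
on such a set permutes the colors at every vertex, which keeps the coloring proper.
-/

open SimpleGraph

variable {V : Type*}

namespace SimpleGraph.Walk

variable {G : SimpleGraph V} {u v : V}

lemma start_mem_head_edges (w : G.Walk u v) (h : w.edges ≠ []) : u ∈ w.edges.head h := by
  rw [head_edges_eq_mk_start_snd]
  exact Sym2.mem_mk_left _ _

lemma end_mem_getLast_edges (w : G.Walk u v) (h : w.edges ≠ []) : v ∈ w.edges.getLast h := by
  rw [getLast_edges_eq_mk_penultimate_end]
  exact Sym2.mem_mk_right _ _

lemma exists_consecutive_edges_of_mem_support {x : V} (w : G.Walk u v) (hx : x ∈ w.support)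
    (hxu : x ≠ u) (hxv : x ≠ v) :
    ∃ l₁ l₂ : List (Sym2 V), ∃ f g : Sym2 V,
      w.edges = l₁ ++ f :: g :: l₂ ∧ x ∈ f ∧ x ∈ g := by
  classical
  set w₁ := w.takeUntil x hx
  set w₂ := w.dropUntil x hx
  have h₁ : w₁.edges ≠ [] := fun h => hxu (edges_eq_nil.1 h).eq.symm
  have h₂ : w₂.edges ≠ [] := fun h => hxv (edges_eq_nil.1 h).eq
  refine ⟨w₁.edges.dropLast, w₂.edges.tail, w₁.edges.getLast h₁, w₂.edges.head h₂, ?_,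
    end_mem_getLast_edges w₁ h₁, start_mem_head_edges w₂ h₂⟩
  rw [List.cons_head_tail, ← List.singleton_append, ← List.append_assoc,
    List.dropLast_append_getLast, ← edges_append, take_spec]

end SimpleGraph.Walk

section FlipOn

variable {k : ℕ} {G : SimpleGraph V} {C : Sym2 V → Fin k} {c c' : Fin k}

def IsKempeClosed (G : SimpleGraph V) (C : Sym2 V → Fin k) (c c' : Fin k) (S : Set (Sym2 V)) :
    Prop :=
  ∀ e ∈ S, ∀ f ∈ G.edgeSet, (∃ v, v ∈ e ∧ v ∈ f) → (C f = c ∨ C f = c') → f ∈ S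

lemma flipOn_of_mem {S : Set (Sym2 V)} {e : Sym2 V} (he : e ∈ S) :
    flipOn C c c' S e = Equiv.swap c c' (C e) := by
  simp [flipOn, he]

lemma flipOn_of_notMem {S : Set (Sym2 V)} {e : Sym2 V} (he : e ∉ S) :
    flipOn C c c' S e = C e := by
  simp [flipOn, he]

theorem IsProperEdgeColoring.flipOn_of_isKempeClosed {S : Set (Sym2 V)}
    (hC : IsProperEdgeColoring G C) (hS : IsKempeClosed G C c c' S) :
    IsProperEdgeColoring G (flipOn C c c' S) := by
  have swap_ne_of_mem_of_notMem : ∀ e ∈ G.edgeSet, ∀ f ∈ G.edgeSet, e ≠ f → (∃ v, v ∈ e ∧ v ∈ f) →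
      e ∈ S → f ∉ S → Equiv.swap c c' (C e) ≠ C f := by
    intro e he f hf hef hv heS hfS hswap
    have hfc : C f ≠ c ∧ C f ≠ c' := not_or.1 fun hfc => hfS (hS e heS f hf hv hfc)
    rw [← Equiv.swap_apply_of_ne_of_ne hfc.1 hfc.2] at hswap
    exact hC e he f hf hef hv ((Equiv.swap c c').injective hswap)
  intro e₁ he₁ e₂ he₂ hne hv
  by_cases h₁ : e₁ ∈ S <;> by_cases h₂ : e₂ ∈ S
  · rw [flipOn_of_mem h₁, flipOn_of_mem h₂]
    exact (Equiv.injective _).ne (hC e₁ he₁ e₂ he₂ hne hv)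
  · rw [flipOn_of_mem h₁, flipOn_of_notMem h₂]
    exact swap_ne_of_mem_of_notMem e₁ he₁ e₂ he₂ hne hv h₁ h₂
  · rw [flipOn_of_notMem h₁, flipOn_of_mem h₂]
    obtain ⟨v, hv₁, hv₂⟩ := hv
    exact (swap_ne_of_mem_of_notMem e₂ he₂ e₁ he₁ hne.symm ⟨v, hv₂, hv₁⟩ h₂ h₁).symm
  · rw [flipOn_of_notMem h₁, flipOn_of_notMem h₂]
    exact hC e₁ he₁ e₂ he₂ hne hv

end FlipOn

section AltWalk

variable {k : ℕ} {G : SimpleGraph V} {C : Sym2 V → Fin k} {c c' : Fin k} {u v : V}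
  {w : G.Walk u v} {e : Sym2 V}

lemma mem_edges_of_not_extendableAtEnd (hC : IsProperEdgeColoring G C)
    (hw : ¬ ExtendableAtEnd G C c c' w) (he : e ∈ G.edgeSet) (hve : v ∈ e)
    (hec : C e = c ∨ C e = c') : e ∈ w.edges := by
  by_contra hew
  obtain ⟨x, rfl⟩ : ∃ x, e = s(v, x) := ⟨_, (Sym2.other_spec hve).symm⟩
  refine hw ⟨x, he, hec, hew, fun h => hC _ he _ (w.edges_subset_edgeSet (List.getLast_mem h))
    (fun hlast => hew (hlast ▸ List.getLast_mem h)) ⟨v, hve, w.end_mem_getLast_edges h⟩⟩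

lemma IsAltWalk.mem_edges_of_mem_support_of_ne (hC : IsProperEdgeColoring G C)
    (hw : IsAltWalk G C c c' w) {x : V} (hx : x ∈ w.support) (hxu : x ≠ u) (hxv : x ≠ v)
    (he : e ∈ G.edgeSet) (hxe : x ∈ e) (hec : C e = c ∨ C e = c') : e ∈ w.edges := by
  obtain ⟨l₁, l₂, f, g, hedges, hxf, hxg⟩ := w.exists_consecutive_edges_of_mem_support hx hxu hxv
  have hf : f ∈ w.edges := by simp [hedges]
  have hg : g ∈ w.edges := by simp [hedges]
  have hfg : C f ≠ C g := by
    have hchain := hw.2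
    rw [hedges] at hchain
    exact (List.isChain_cons_cons.1 (List.isChain_append.1 hchain).2.1).1
  by_contra hew
  have hef : C e ≠ C f := hC e he f (w.edges_subset_edgeSet hf) (by rintro rfl; exact hew hf)
    ⟨x, hxe, hxf⟩
  have heg : C e ≠ C g := hC e he g (w.edges_subset_edgeSet hg) (by rintro rfl; exact hew hg)
    ⟨x, hxe, hxg⟩
  rcases hw.1 f hf with hfc | hfc <;> rcases hw.1 g hg with hgc | hgc <;>
    rcases hec with hec | hec <;> simp_all

lemma IsMaximalAltWalk.mem_edges_of_mem_support (hC : IsProperEdgeColoring G C)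
    (hw : IsMaximalAltWalk G C c c' w) {x : V} (hx : x ∈ w.support) (he : e ∈ G.edgeSet)
    (hxe : x ∈ e) (hec : C e = c ∨ C e = c') : e ∈ w.edges := by
  obtain rfl | hxu := eq_or_ne x u
  · simpa using mem_edges_of_not_extendableAtEnd hC hw.2.2 he hxe hec
  obtain rfl | hxv := eq_or_ne x v
  · exact mem_edges_of_not_extendableAtEnd hC hw.2.1 he hxe hec
  exact hw.1.mem_edges_of_mem_support_of_ne hC hx hxu hxv he hxe hec

end AltWalk

theorem stmt13_general {k : ℕ} (G : SimpleGraph V)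
    (C : Sym2 V → Fin k) (hC : IsProperEdgeColoring G C) (c c' : Fin k)
    (ps : List ((u : V) × (v : V) × G.Walk u v))
    (hmax : ∀ p ∈ ps, IsMaximalAltWalk G C c c' p.2.2) :
    IsProperEdgeColoring G (flipOn C c c' {e | ∃ p ∈ ps, e ∈ p.2.2.edges}) := by
  refine hC.flipOn_of_isKempeClosed ?_
  rintro e ⟨p, hp, hep⟩ f hf ⟨x, hxe, hxf⟩ hfc
  exact ⟨p, hp, (hmax p hp).mem_edges_of_mem_support hC
    (p.2.2.mem_support_of_mem_edges hep hxe) hf hxf hfc⟩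

/-- Swapping the colors `c` and `c'` on the edges of one or two vertex-disjoint
maximal alternating paths of a properly edge-colored bipartite graph yields again a proper
edge coloring. -/
theorem stmt13 {k : ℕ} (G : SimpleGraph V) (hbip : _root_.IsBipartite G)
    (C : Sym2 V → Fin k) (hC : IsProperEdgeColoring G C) (c c' : Fin k)
    (ps : List ((u : V) × (v : V) × G.Walk u v))
    (h1 : 1 ≤ ps.length) (h2 : ps.length ≤ 2)
    (hpath : ∀ p ∈ ps, p.2.2.IsPath)
    (hmax : ∀ p ∈ ps, IsMaximalAltWalk G C c c' p.2.2)
    (hdisj : ps.Pairwise fun p q => ∀ x ∈ p.2.2.support, x ∉ q.2.2.support) :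
    IsProperEdgeColoring G (flipOn C c c' {e | ∃ p ∈ ps, e ∈ p.2.2.edges}) :=
  stmt13_general G C hC c c' ps hmax
end
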